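/- If a bipartite density matrix ρ on H₁ ⊗ H₂ is separable, i.e. ρ = Σᵢ pᵢ σᵢ ⊗ τᵢ with pᵢ ≥ 0, Σᵢ pᵢ = 1, and σᵢ, τᵢ density matrices, then its partial transpose ρ^{T₂} (transpose applied to the second tensor factor) is positive semidefinite. -/

import Mathlib

open Matrix
open scoped Kronecker Classical ComplexOrder

noncomputable section

/-- A density matrix: positive semidefinite with unit trace. -/
def IsDensity {N : Type*} [Fintype N] (ρ : Matrix N N ℂ) : Prop :=
  ρ.PosSemidef ∧ ρ.trace = 1

/-- Outer product `|ψ⟩⟨ψ|`. -/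
def outer {N : Type*} (ψ : N → ℂ) : Matrix N N ℂ :=
  Matrix.of fun i j => ψ i * star (ψ j)

/-- Squared norm of a vector. -/
def vnormSq {N : Type*} [Fintype N] (ψ : N → ℂ) : ℝ := ∑ x, ‖ψ x‖ ^ 2

/-- Partial transpose with respect to the first tensor factor. -/
def pt₁ {m n : Type*} (ρ : Matrix (m × n) (m × n) ℂ) : Matrix (m × n) (m × n) ℂ :=
  Matrix.of fun p q => ρ (q.1, p.2) (p.1, q.2)

/-- Partial transpose with respect to the second tensor factor. -/
def pt₂ {m n : Type*} (ρ : Matrix (m × n) (m × n) ℂ) : Matrix (m × n) (m × n) ℂ :=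
  Matrix.of fun p q => ρ (p.1, q.2) (q.1, p.2)

/-- Partial trace over the first tensor factor. -/
def ptr₁ {m n : Type*} [Fintype m] (ρ : Matrix (m × n) (m × n) ℂ) : Matrix n n ℂ :=
  Matrix.of fun j l => ∑ i, ρ (i, j) (i, l)

/-- Partial trace over the second tensor factor. -/
def ptr₂ {m n : Type*} [Fintype n] (ρ : Matrix (m × n) (m × n) ℂ) : Matrix m m ℂ :=
  Matrix.of fun i k => ∑ j, ρ (i, j) (k, j)

/-- The positive semidefinite square root (Mathlib's former `Matrix.PosSemidef.sqrt`). -/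
def Matrix.PosSemidef.sqrt {𝕜 : Type*} [RCLike 𝕜] {N : Type*} [Fintype N] [DecidableEq N]
    {A : Matrix N N 𝕜} (hA : A.PosSemidef) : Matrix N N 𝕜 :=
  hA.1.eigenvectorUnitary.1 * diagonal ((↑) ∘ (fun x => √x) ∘ hA.1.eigenvalues) *
    (star hA.1.eigenvectorUnitary : Matrix N N 𝕜)

/-- Trace norm (sum of singular values): `‖A‖₁ = tr √(AᴴA)`. -/
def traceNorm {N : Type*} [Fintype N] [DecidableEq N] (A : Matrix N N ℂ) : ℝ :=
  ((Matrix.posSemidef_conjTranspose_mul_self A).sqrt.trace).re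

/-- Purity `tr ρ²` (real part). -/
def purity {N : Type*} [Fintype N] (ρ : Matrix N N ℂ) : ℝ := ((ρ * ρ).trace).re

/-- Separability of a bipartite density matrix. -/
def Separable {m n : Type*} [Fintype m] [Fintype n]
    (ρ : Matrix (m × n) (m × n) ℂ) : Prop :=
  ∃ (k : ℕ) (p : Fin k → ℝ) (σ : Fin k → Matrix m m ℂ) (τ : Fin k → Matrix n n ℂ),
    (∀ i, 0 ≤ p i) ∧ (∑ i, p i = 1) ∧ (∀ i, IsDensity (σ i)) ∧ (∀ i, IsDensity (τ i)) ∧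
    ρ = ∑ i, (p i : ℂ) • (σ i ⊗ₖ τ i)

/-- Extension `E ⊗ id` of a map on the first factor to a bipartite space. -/
def tensExtA {s n : Type*} (E : Matrix s s ℂ → Matrix s s ℂ)
    (X : Matrix (s × n) (s × n) ℂ) : Matrix (s × n) (s × n) ℂ :=
  Matrix.of fun p q => E (Matrix.of fun i k => X (i, p.2) (k, q.2)) p.1 q.1

/-- Extension `id ⊗ A` of a map on the second factor to a bipartite space. -/
def tensExtSys {e s : Type*} (A : Matrix s s ℂ → Matrix s s ℂ)
    (X : Matrix (e × s) (e × s) ℂ) : Matrix (e × s) (e × s) ℂ :=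
  Matrix.of fun p q => A (Matrix.of fun i k => X (p.1, i) (q.1, k)) p.2 q.2

/-- Complete positivity: `E ⊗ id_n` maps PSD matrices to PSD matrices for every `n`. -/
def IsCP {s : Type*} [Fintype s] (E : Matrix s s ℂ → Matrix s s ℂ) : Prop :=
  ∀ (n : ℕ) (X : Matrix (s × Fin n) (s × Fin n) ℂ), X.PosSemidef → (tensExtA E X).PosSemidef

/-- Trace preservation. -/
def IsTP {s : Type*} [Fintype s] (E : Matrix s s ℂ → Matrix s s ℂ) : Prop :=
  ∀ X, (E X).trace = X.trace

/-- The maximally entangled unit vector `|Ψ⁺⟩ = (1/√d) Σᵢ |i⟩⊗|i⟩`. -/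
def maxEntVec (d : ℕ) : Fin d × Fin d → ℂ :=
  fun p => if p.1 = p.2 then (((Real.sqrt d)⁻¹ : ℝ) : ℂ) else 0

/-- The Choi state `χ[E] = (E ⊗ id)(|Ψ⁺⟩⟨Ψ⁺|)` of a map `E`. -/
def ChoiMap {d : ℕ} (E : Matrix (Fin d) (Fin d) ℂ → Matrix (Fin d) (Fin d) ℂ) :
    Matrix (Fin d × Fin d) (Fin d × Fin d) ℂ :=
  tensExtA E (outer (maxEntVec d))

/-- Choi state of a single-intervention process tensor `T`, viewed as a function of the
initial system state and the intervention (a CP map). The first index pair is the first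
time segment (intervention input leg, initial state leg), the second pair is the second
time segment (final state leg, intervention output leg). It is obtained by letting `T`
act on halves of maximally entangled pairs, i.e. on matrix units with `1/d` weights. -/
def ChoiPT {d : ℕ}
    (T : Matrix (Fin d) (Fin d) ℂ →
      (Matrix (Fin d) (Fin d) ℂ → Matrix (Fin d) (Fin d) ℂ) → Matrix (Fin d) (Fin d) ℂ) :
    Matrix ((Fin d × Fin d) × (Fin d × Fin d)) ((Fin d × Fin d) × (Fin d × Fin d)) ℂ :=
  Matrix.of fun p q => (d : ℂ)⁻¹ * (d : ℂ)⁻¹ *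
    (T (Matrix.single p.1.2 q.1.2 1)
       (fun ρ => ρ p.1.1 q.1.1 • Matrix.single p.2.2 q.2.2 1)) p.2.1 q.2.1

/-- A single-intervention process tensor has classical memory if it is a composition of
conditioned instruments: `T[ρ, A] = Σᵢ Φᵢ(A(Iᵢ(ρ)))` with `{Iᵢ}` a quantum instrument
(each `Iᵢ` CP, their sum trace preserving) and each `Φᵢ` a CPT map. -/
def HasClassicalMemory {d : ℕ}
    (T : Matrix (Fin d) (Fin d) ℂ →
      (Matrix (Fin d) (Fin d) ℂ → Matrix (Fin d) (Fin d) ℂ) → Matrix (Fin d) (Fin d) ℂ) :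
    Prop :=
  ∃ (k : ℕ) (I Φ : Fin k → (Matrix (Fin d) (Fin d) ℂ → Matrix (Fin d) (Fin d) ℂ)),
    (∀ i, IsLinearMap ℂ (I i)) ∧ (∀ i, IsCP (I i)) ∧ IsTP (fun ρ => ∑ i, I i ρ) ∧
    (∀ i, IsLinearMap ℂ (Φ i)) ∧ (∀ i, IsCP (Φ i)) ∧ (∀ i, IsTP (Φ i)) ∧
    (∀ ρ A, T ρ A = ∑ i, Φ i (A (I i ρ)))

/-- Action of a Kraus operator on the first factor of a bipartite vector: `(L ⊗ I)ψ`. -/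
def lact {m n : Type*} [Fintype m] (L : Matrix m m ℂ) (ψ : m × n → ℂ) : m × n → ℂ :=
  fun p => ∑ i, L p.1 i * ψ (i, p.2)

/-- Concurrence of a pure bipartite state: `C(ψ) = √(2(1 − tr((tr₂|ψ⟩⟨ψ|)²)))`. -/
def concPure {m n : Type*} [Fintype m] [Fintype n] (ψ : m × n → ℂ) : ℝ :=
  Real.sqrt (2 * (1 - purity (ptr₂ (outer ψ))))

/-- The set of average values `Σₖ pₖ f(ψₖ)` over all pure-state decompositions of `ρ`. -/
def decompAvgs {m n : Type*} [Fintype m] [Fintype n]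
    (f : (m × n → ℂ) → ℝ) (ρ : Matrix (m × n) (m × n) ℂ) : Set ℝ :=
  { r | ∃ (k : ℕ) (p : Fin k → ℝ) (ψ : Fin k → m × n → ℂ),
      (∀ i, 0 < p i) ∧ (∑ i, p i = 1) ∧ (∀ i, vnormSq (ψ i) = 1) ∧
      (ρ = ∑ i, (p i : ℂ) • outer (ψ i)) ∧ r = ∑ i, p i * f (ψ i) }

/-- An entanglement monotone: a nonnegative function of pure bipartite states whose
average does not increase under local CP operations (given by Kraus operators) on the
system (first) factor. -/
def IsEntMonotone {m n : Type*} [Fintype m] [Fintype n] (f : (m × n → ℂ) → ℝ) : Prop :=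
  (∀ ψ, 0 ≤ f ψ) ∧
  ∀ (k : ℕ) (L : Fin k → Matrix m m ℂ), (∑ j, (L j)ᴴ * L j) = 1 →
    ∀ ψ : m × n → ℂ, vnormSq ψ = 1 →
      (∑ j, if vnormSq (lact (L j) ψ) = 0 then 0 else
        vnormSq (lact (L j) ψ) *
          f (fun x => (((Real.sqrt (vnormSq (lact (L j) ψ)))⁻¹ : ℝ) : ℂ) * lact (L j) ψ x))
        ≤ f ψ

end

/-! Partial transposition is linear and sends `σ ⊗ τ` to `σ ⊗ τᵀ`, where `τᵀ` is again positive
semidefinite; hence it sends a nonnegative combination of product states to a nonnegative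
combination of Kronecker products of positive semidefinite matrices. -/

section PartialTranspose

variable {m n : Type*}

lemma pt₂_kronecker (A : Matrix m m ℂ) (B : Matrix n n ℂ) : pt₂ (A ⊗ₖ B) = A ⊗ₖ Bᵀ := by
  ext ⟨i, j⟩ ⟨k, l⟩
  simp [pt₂, kroneckerMap_apply]

lemma pt₂_smul (c : ℂ) (ρ : Matrix (m × n) (m × n) ℂ) : pt₂ (c • ρ) = c • pt₂ ρ := by
  ext p q
  simp [pt₂]

lemma pt₂_sum {ι : Type*} (s : Finset ι) (ρ : ι → Matrix (m × n) (m × n) ℂ) :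
    pt₂ (∑ i ∈ s, ρ i) = ∑ i ∈ s, pt₂ (ρ i) := by
  ext p q
  simp [pt₂, Matrix.sum_apply]

end PartialTranspose

theorem stmt0_general {m n : Type*} [Fintype m] [Fintype n]
    (ρ : Matrix (m × n) (m × n) ℂ) (hsep : Separable ρ) :
    (pt₂ ρ).PosSemidef := by
  obtain ⟨k, p, σ, τ, hp, -, hσ, hτ, rfl⟩ := hsep
  simp only [pt₂_sum, pt₂_smul, pt₂_kronecker]
  exact posSemidef_sum _ fun i _ =>
    ((hσ i).1.kronecker (hτ i).1.transpose).smul (by exact_mod_cast hp i)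

/-- A separable bipartite density matrix has positive semidefinite
partial transpose (over the second factor). -/
theorem stmt0 {m n : Type*} [Fintype m] [Fintype n]
    (ρ : Matrix (m × n) (m × n) ℂ) (hρ : IsDensity ρ) (hsep : Separable ρ) :
    (pt₂ ρ).PosSemidef :=
  stmt0_general ρ hsep
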